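/- arXiv:2602.00244 — 3 statements merged into one kernel-verified Lean document; each statement's English description precedes it below -/
import Mathlib

section
/- Let (U_x)_j = minmod(θ(ū_j − ū_{j−1})/Δx, (ū_{j+1} − ū_{j−1})/(2Δx), θ(ū_{j+1} − ū_j)/Δx) with θ ∈ [1,2] and Δx > 0. Then the reconstructed interface values u^-_{j+1/2} = ū_j + (Δx/2)(U_x)_j and u^+_{j−1/2} = ū_j − (Δx/2)(U_x)_j lie between the neighboring cell averages: if ū_{j−1} ≤ ū_j ≤ ū_{j+1} then ū_j ≤ u^-_{j+1/2} ≤ ū_{j+1} and ū_{j−1} ≤ u^+_{j−1/2} ≤ ū_j, provided θ ≤ 2. -/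
/-!
For monotone data the central difference is nonnegative, so the minmod slope `s` is nonnegative,
and it never exceeds the positive part of either one-sided slope `θ · jump / Δx`. Hence the
correction `Δx / 2 · s` is at most `θ / 2 · jump ≤ jump` on either side.
-/

/-- The three-argument minmod limiter. -/
noncomputable def minmod3 (z₁ z₂ z₃ : ℝ) : ℝ :=
  if 0 < z₁ ∧ 0 < z₂ ∧ 0 < z₃ then min z₁ (min z₂ z₃)
  else if z₁ < 0 ∧ z₂ < 0 ∧ z₃ < 0 then max z₁ (max z₂ z₃)
  else 0

section Minmod

variable {z₁ z₂ z₃ : ℝ}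

theorem minmod3_le_max_zero_left : minmod3 z₁ z₂ z₃ ≤ max z₁ 0 := by
  unfold minmod3
  split_ifs with _ hneg
  · exact (min_le_left _ _).trans (le_max_left _ _)
  · exact (max_lt hneg.1 (max_lt hneg.2.1 hneg.2.2)).le.trans (le_max_right _ _)
  · exact le_max_right _ _

theorem minmod3_le_max_zero_right : minmod3 z₁ z₂ z₃ ≤ max z₃ 0 := by
  unfold minmod3
  split_ifs with _ hneg
  · exact ((min_le_right _ _).trans (min_le_right _ _)).trans (le_max_left _ _)
  · exact (max_lt hneg.1 (max_lt hneg.2.1 hneg.2.2)).le.trans (le_max_right _ _)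
  · exact le_max_right _ _

theorem minmod3_nonneg_of_nonneg_mid (h₂ : 0 ≤ z₂) : 0 ≤ minmod3 z₁ z₂ z₃ := by
  unfold minmod3
  split_ifs with hpos hneg
  · exact le_min hpos.1.le (le_min hpos.2.1.le hpos.2.2.le)
  · exact absurd hneg.2.1 h₂.not_gt
  · exact le_rfl

end Minmod

theorem half_mul_le_of_le_max_mul_div {Δx θ d s : ℝ} (hΔx : 0 < Δx) (hθ : θ ≤ 2) (hd : 0 ≤ d)
    (hs : s ≤ max (θ * d / Δx) 0) : Δx / 2 * s ≤ d := by
  calc Δx / 2 * s ≤ Δx / 2 * max (θ * d / Δx) 0 := by gcongr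
    _ = max (θ / 2 * d) 0 := by
      rw [mul_max_of_nonneg _ _ (by positivity), mul_zero]
      field_simp
    _ ≤ d := max_le (by nlinarith) hd

theorem minmod_reconstruction_bounds_general (uL uC uR Δx θ s : ℝ)
    (hΔx : 0 < Δx) (hθ2 : θ ≤ 2)
    (hs : s = minmod3 (θ * (uC - uL) / Δx) ((uR - uL) / (2 * Δx))
      (θ * (uR - uC) / Δx))
    (hmono1 : uL ≤ uC) (hmono2 : uC ≤ uR) :
    (uC ≤ uC + Δx / 2 * s ∧ uC + Δx / 2 * s ≤ uR) ∧
      (uL ≤ uC - Δx / 2 * s ∧ uC - Δx / 2 * s ≤ uC) := by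
  have hcentral : 0 ≤ (uR - uL) / (2 * Δx) := div_nonneg (by linarith) (by positivity)
  have hs_nonneg : 0 ≤ Δx / 2 * s :=
    mul_nonneg (by positivity) (hs ▸ minmod3_nonneg_of_nonneg_mid hcentral)
  have hright : Δx / 2 * s ≤ uR - uC :=
    half_mul_le_of_le_max_mul_div hΔx hθ2 (by linarith) (hs ▸ minmod3_le_max_zero_right)
  have hleft : Δx / 2 * s ≤ uC - uL :=
    half_mul_le_of_le_max_mul_div hΔx hθ2 (by linarith) (hs ▸ minmod3_le_max_zero_left)
  refine ⟨⟨?_, ?_⟩, ?_, ?_⟩ <;> linarith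

/-- Minmod reconstruction is bounded by the neighboring cell averages for
monotone data. -/
theorem minmod_reconstruction_bounds (uL uC uR Δx θ s : ℝ)
    (hΔx : 0 < Δx) (hθ1 : 1 ≤ θ) (hθ2 : θ ≤ 2)
    (hs : s = minmod3 (θ * (uC - uL) / Δx) ((uR - uL) / (2 * Δx))
      (θ * (uR - uC) / Δx))
    (hmono1 : uL ≤ uC) (hmono2 : uC ≤ uR) :
    (uC ≤ uC + Δx / 2 * s ∧ uC + Δx / 2 * s ≤ uR) ∧
      (uL ≤ uC - Δx / 2 * s ∧ uC - Δx / 2 * s ≤ uC) :=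
  minmod_reconstruction_bounds_general uL uC uR Δx θ s hΔx hθ2 hs hmono1 hmono2
end

section
/- For the scalar upwind scheme u_j^{n+1} = (1−c) u_j^n + c u_{j−1}^n with boundary condition u_0^n = κ u_N^n, consider the weighted discrete Lyapunov functional L^n = ∑_{j=1}^N e^{−μ x_j} (u_j^n)^2 with μ > 0 and x_j = jΔx; in the unit-CFL case c = 1, L^{n+1} ≤ L^n for all n whenever κ^2 e^{−μ x_1} ≤ e^{−μ x_N}, i.e., |κ| ≤ e^{−μ(x_N − x_1)/2}. -/
/-- The exponentially weighted discrete Lyapunov functional is non-increasing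
for the unit-CFL upwind scheme with feedback boundary, provided
`|κ| ≤ e^{−μ(x_N − x_1)/2}`. -/
theorem weighted_lyapunov_nonincreasing (N : ℕ) (hN : 1 ≤ N)
    (u : ℕ → ℕ → ℝ) (κ μ Δx : ℝ) (hμ : 0 < μ) (hΔx : 0 < Δx)
    (x : ℕ → ℝ) (hx : ∀ j, x j = j * Δx)
    (hbc : ∀ n, u n 0 = κ * u n N)
    (hscheme : ∀ n, ∀ j, 1 ≤ j → j ≤ N → u (n + 1) j = u n (j - 1))
    (L : ℕ → ℝ)
    (hL : ∀ n, L n = ∑ j ∈ Finset.Icc 1 N, Real.exp (-μ * x j) * (u n j) ^ 2)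
    (hκ : |κ| ≤ Real.exp (-(μ * (x N - x 1)) / 2)) :
    ∀ n, L (n + 1) ≤ L n := by
  intro n
  set w : ℕ → ℝ := fun j => Real.exp (-μ * x j) with hw
  -- boundary weight inequality
  have hκ2 : κ ^ 2 * w 1 ≤ w N := by
    have h1 : κ ^ 2 ≤ Real.exp (-(μ * (x N - x 1))) := by
      have h2 : |κ| ^ 2 ≤ Real.exp (-(μ * (x N - x 1)) / 2) ^ 2 :=
        pow_le_pow_left₀ (abs_nonneg κ) hκ 2
      rw [sq_abs] at h2
      calc κ ^ 2 ≤ Real.exp (-(μ * (x N - x 1)) / 2) ^ 2 := h2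
        _ = Real.exp (-(μ * (x N - x 1))) := by
            rw [← Real.exp_nat_mul]; push_cast; ring_nf
    calc κ ^ 2 * w 1 ≤ Real.exp (-(μ * (x N - x 1))) * w 1 := by
          apply mul_le_mul_of_nonneg_right h1 (Real.exp_pos _).le
      _ = w N := by
          simp only [hw, ← Real.exp_add]; ring_nf
  -- weight monotone
  have hwle : ∀ j : ℕ, 1 ≤ j → w j ≤ w (j - 1) := by
    intro j hj
    apply Real.exp_le_exp.mpr
    rw [hx, hx]
    have : ((j : ℝ) - 1) * Δx ≤ (j : ℝ) * Δx := by nlinarith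
    have hcast : ((j - 1 : ℕ) : ℝ) = (j : ℝ) - 1 := by
      have := Nat.cast_sub hj (R := ℝ); simpa using this
    rw [hcast]
    nlinarith
  rw [hL, hL]
  have hLn1 : ∑ j ∈ Finset.Icc 1 N, Real.exp (-μ * x j) * (u (n+1) j) ^ 2
      = w 1 * (u n 0) ^ 2 + ∑ j ∈ Finset.Ioc 1 N, w j * (u n (j-1)) ^ 2 := by
    rw [← Finset.Ioc_insert_left hN, Finset.sum_insert (by simp)]
    congr 1
    · rw [hscheme n 1 le_rfl hN]
    · apply Finset.sum_congr rfl
      intro j hj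
      rw [Finset.mem_Ioc] at hj
      rw [hscheme n j (by omega) hj.2]
  rw [hLn1]
  have hLn : ∑ j ∈ Finset.Icc 1 N, Real.exp (-μ * x j) * (u n j) ^ 2
      = ∑ j ∈ Finset.Ico 1 N, w j * (u n j) ^ 2 + w N * (u n N) ^ 2 := by
    rw [← Finset.Ico_insert_right hN, Finset.sum_insert (by simp)]
    ring
  rw [hLn]
  have hmid : ∑ j ∈ Finset.Ioc 1 N, w j * (u n (j-1)) ^ 2
      ≤ ∑ j ∈ Finset.Ico 1 N, w j * (u n j) ^ 2 := by
    have step : ∑ j ∈ Finset.Ioc 1 N, w j * (u n (j-1)) ^ 2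
        ≤ ∑ j ∈ Finset.Ioc 1 N, w (j-1) * (u n (j-1)) ^ 2 := by
      apply Finset.sum_le_sum
      intro j hj
      rw [Finset.mem_Ioc] at hj
      exact mul_le_mul_of_nonneg_right (hwle j (by omega)) (sq_nonneg _)
    refine step.trans_eq ?_
    apply Finset.sum_nbij' (fun j => j - 1) (fun j => j + 1)
    · intro a ha; rw [Finset.mem_Ioc] at ha; simp [Finset.mem_Ico]; omega
    · intro a ha; rw [Finset.mem_Ico] at ha; simp [Finset.mem_Ioc]; omega
    · intro a ha; rw [Finset.mem_Ioc] at ha; omega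
    · intro a ha; rw [Finset.mem_Ico] at ha; omega
    · intro a ha; rfl
  have hbd : w 1 * (u n 0) ^ 2 ≤ w N * (u n N) ^ 2 := by
    rw [hbc n, mul_pow]
    calc w 1 * (κ ^ 2 * u n N ^ 2) = (κ ^ 2 * w 1) * u n N ^ 2 := by ring
      _ ≤ w N * u n N ^ 2 := mul_le_mul_of_nonneg_right hκ2 (sq_nonneg _)
  linarith
end

section
/- Let P^n be a probability mass function on a finite grid, updated by P^{n+1} ∝ Λ^{n+1} P^n with Λ^{n+1}(κ_ℓ) ∈ {α, 1}, α ∈ (0,1), where for every ℓ ∉ S the value α is applied at infinitely many steps n and for every ℓ ∈ S the value 1 is applied at all steps. If P^0(κ_ℓ) > 0 for some ℓ ∈ S, then P^n(κ_ℓ) → 0 for every ℓ ∉ S as n → ∞, and the total mass of S converges to 1. -/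
/-!
Unrolling the recursion, `Pⁿ(κ_ℓ)` is the unnormalized posterior `P⁰(κ_ℓ) ∏_{k<n} Λᵏ⁺¹(κ_ℓ)`
divided by its total weight (the paper's `Λᵏ⁺¹` is `Λ k` here). For `ℓ ∉ S` the product is
`α` raised to the number of penalized steps, which tends to infinity, while the total weight
never drops below the (untouched) weight of a point of `S` charged by the prior. Hence every
`Pⁿ(κ_ℓ)` with `ℓ ∉ S` vanishes in the limit, and since the posteriors stay normalized the
mass of `S` tends to `1`.
-/

open Finset Filter Topology

theorem Finset.prod_range_eq_pow_count {M : Type*} [CommMonoid M] {f : ℕ → M} {a : M}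
    (hf : ∀ k, f k = a ∨ f k = 1) [DecidablePred (f · = a)] (n : ℕ) :
    ∏ k ∈ range n, f k = a ^ Nat.count (f · = a) n := by
  rw [Nat.count_eq_card_filter_range, ← prod_const, prod_filter]
  refine prod_congr rfl fun k _ => ?_
  split_ifs with h
  · exact h
  · exact (hf k).resolve_left h

theorem Nat.tendsto_count_atTop_of_infinite {p : ℕ → Prop} [DecidablePred p]
    (hp : {n | p n}.Infinite) : Tendsto (Nat.count p) atTop atTop :=
  tendsto_atTop_atTop_of_monotone (Nat.count_monotone p) fun N =>
    ⟨_, ((Nat.surjective_count_of_infinite_setOfPred hp) N).choose_spec.ge⟩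

theorem Filter.Tendsto.div_of_le {β : Type*} {l : Filter β} {f g : β → ℝ} {c : ℝ}
    (hf : Tendsto f l (𝓝 0)) (hf0 : ∀ b, 0 ≤ f b) (hc : 0 < c) (hg : ∀ b, c ≤ g b) :
    Tendsto (fun b => f b / g b) l (𝓝 0) := by
  have hbound : Tendsto (fun b => f b / c) l (𝓝 0) := by simpa using hf.div_const c
  exact tendsto_of_tendsto_of_tendsto_of_le_of_le tendsto_const_nhds hbound
    (fun b => div_nonneg (hf0 b) (hc.trans_le (hg b)).le)
    (fun b => div_le_div_of_nonneg_left (hf0 b) hc (hg b))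

namespace BayesUpdate

variable {ι : Type*}

def unnormalizedPosterior (P₀ : ι → ℝ) (Λ : ℕ → ι → ℝ) (n : ℕ) (ℓ : ι) : ℝ :=
  P₀ ℓ * ∏ k ∈ range n, Λ k ℓ

@[simp]
theorem unnormalizedPosterior_zero (P₀ : ι → ℝ) (Λ : ℕ → ι → ℝ) :
    unnormalizedPosterior P₀ Λ 0 = P₀ := by
  ext ℓ
  simp [unnormalizedPosterior]

theorem unnormalizedPosterior_succ (P₀ : ι → ℝ) (Λ : ℕ → ι → ℝ) (n : ℕ) (ℓ : ι) :
    unnormalizedPosterior P₀ Λ (n + 1) ℓ = Λ n ℓ * unnormalizedPosterior P₀ Λ n ℓ := by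
  simp only [unnormalizedPosterior, prod_range_succ]
  ring

theorem unnormalizedPosterior_nonneg {P₀ : ι → ℝ} {Λ : ℕ → ι → ℝ} (hP₀ : ∀ ℓ, 0 ≤ P₀ ℓ)
    (hΛ : ∀ n ℓ, 0 ≤ Λ n ℓ) (n : ℕ) (ℓ : ι) : 0 ≤ unnormalizedPosterior P₀ Λ n ℓ :=
  mul_nonneg (hP₀ ℓ) (prod_nonneg fun k _ => hΛ k ℓ)

theorem unnormalizedPosterior_of_forall_eq_one (P₀ : ι → ℝ) {Λ : ℕ → ι → ℝ} {ℓ : ι}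
    (hΛ : ∀ n, Λ n ℓ = 1) (n : ℕ) : unnormalizedPosterior P₀ Λ n ℓ = P₀ ℓ := by
  simp [unnormalizedPosterior, hΛ]

theorem tendsto_unnormalizedPosterior_zero (P₀ : ι → ℝ) {Λ : ℕ → ι → ℝ} {ℓ : ι} {α : ℝ}
    (hα0 : 0 ≤ α) (hα1 : α < 1) (hΛ : ∀ n, Λ n ℓ = α ∨ Λ n ℓ = 1)
    (hpenalized : {n | Λ n ℓ = α}.Infinite) :
    Tendsto (fun n => unnormalizedPosterior P₀ Λ n ℓ) atTop (𝓝 0) := by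
  simp only [unnormalizedPosterior, prod_range_eq_pow_count hΛ]
  simpa using ((tendsto_pow_atTop_nhds_zero_of_lt_one hα0 hα1).comp
    (Nat.tendsto_count_atTop_of_infinite hpenalized)).const_mul (P₀ ℓ)

variable [Fintype ι] {w : ι → ℝ} {P Λ : ℕ → ι → ℝ}

theorem posterior_eq_div
    (hupd : ∀ n ℓ, P (n + 1) ℓ = Λ n ℓ * P n ℓ / ∑ m, w m * (Λ n m * P n m))
    (hnorm : ∑ ℓ, w ℓ * P 0 ℓ = 1)
    (hD : ∀ n, ∑ m, w m * unnormalizedPosterior (P 0) Λ n m ≠ 0) (n : ℕ) (ℓ : ι) :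
    P n ℓ = unnormalizedPosterior (P 0) Λ n ℓ /
      ∑ m, w m * unnormalizedPosterior (P 0) Λ n m := by
  set U := unnormalizedPosterior (P 0) Λ
  induction n generalizing ℓ with
  | zero => simp [U, hnorm]
  | succ n ih =>
    have hZ : ∑ m, w m * (Λ n m * P n m) = (∑ m, w m * U (n + 1) m) / ∑ m, w m * U n m := by
      simp only [ih, unnormalizedPosterior_succ, U, sum_div, mul_div_assoc]
    rw [hupd, hZ, ih, show U (n + 1) ℓ = Λ n ℓ * U n ℓ from unnormalizedPosterior_succ ..]
    field_simp [hD n, hD (n + 1)]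

theorem sum_mul_posterior_eq_one
    (hupd : ∀ n ℓ, P (n + 1) ℓ = Λ n ℓ * P n ℓ / ∑ m, w m * (Λ n m * P n m))
    (hnorm : ∑ ℓ, w ℓ * P 0 ℓ = 1)
    (hD : ∀ n, ∑ m, w m * unnormalizedPosterior (P 0) Λ n m ≠ 0) (n : ℕ) :
    ∑ ℓ, w ℓ * P n ℓ = 1 := by
  simp only [posterior_eq_div hupd hnorm hD n, ← mul_div_assoc, ← sum_div]
  exact div_self (hD n)

theorem tendsto_sum_mul_of_tendsto_zero_compl [DecidableEq ι] {β : Type*} {l : Filter β}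
    {P : β → ι → ℝ} (S : Finset ι) (hsum : ∀ b, ∑ ℓ, w ℓ * P b ℓ = 1)
    (hoff : ∀ ℓ ∉ S, Tendsto (fun b => P b ℓ) l (𝓝 0)) :
    Tendsto (fun b => ∑ ℓ ∈ S, w ℓ * P b ℓ) l (𝓝 1) := by
  have hcompl : Tendsto (fun b => ∑ ℓ ∈ Sᶜ, w ℓ * P b ℓ) l (𝓝 0) := by
    simpa using tendsto_finsetSum Sᶜ fun ℓ hℓ =>
      (hoff ℓ (mem_compl.mp hℓ)).const_mul (w ℓ)
  have hS : ∀ b, ∑ ℓ ∈ S, w ℓ * P b ℓ = 1 - ∑ ℓ ∈ Sᶜ, w ℓ * P b ℓ := fun b => by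
    rw [← hsum b, ← sum_add_sum_compl S]
    ring
  simpa [hS] using hcompl.const_sub 1

end BayesUpdate

open BayesUpdate

/-- If the stabilizing set `S` carries likelihood `1` at every step, every
non-stabilizing parameter is penalized by `α < 1` infinitely often, and the
prior puts positive mass on `S`, then the posterior mass of each non-stabilizing
parameter tends to `0` and the mass of `S` tends to `1`. -/
theorem two_level_update_concentration (Nk : ℕ) (w : Fin Nk → ℝ)
    (P : ℕ → Fin Nk → ℝ) (Λ : ℕ → Fin Nk → ℝ) (S : Finset (Fin Nk))
    (α : ℝ) (hα0 : 0 < α) (hα1 : α < 1)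
    (hw : ∀ ℓ, 0 < w ℓ)
    (hΛval : ∀ n ℓ, Λ n ℓ = α ∨ Λ n ℓ = 1)
    (hΛS : ∀ n, ∀ ℓ ∈ S, Λ n ℓ = 1)
    (hΛoff : ∀ ℓ ∉ S, {n : ℕ | Λ n ℓ = α}.Infinite)
    (hupd : ∀ n ℓ, P (n + 1) ℓ = Λ n ℓ * P n ℓ / ∑ m, w m * (Λ n m * P n m))
    (hP0 : ∀ ℓ, 0 ≤ P 0 ℓ) (hnorm : ∑ ℓ, w ℓ * P 0 ℓ = 1)
    (hSpos : ∃ ℓ ∈ S, 0 < P 0 ℓ) :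
    (∀ ℓ ∉ S, Tendsto (fun n => P n ℓ) atTop (nhds 0)) ∧
      Tendsto (fun n => ∑ ℓ ∈ S, w ℓ * P n ℓ) atTop (nhds 1) := by
  obtain ⟨ℓ₀, hℓ₀S, hℓ₀pos⟩ := hSpos
  set U := unnormalizedPosterior (P 0) Λ
  have hΛ : ∀ n ℓ, 0 ≤ Λ n ℓ := fun n ℓ => by rcases hΛval n ℓ with h | h <;> simp [h, hα0.le]
  have hU : ∀ n ℓ, 0 ≤ U n ℓ := unnormalizedPosterior_nonneg hP0 hΛ
  have hc : 0 < w ℓ₀ * P 0 ℓ₀ := mul_pos (hw ℓ₀) hℓ₀pos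
  have hD : ∀ n, w ℓ₀ * P 0 ℓ₀ ≤ ∑ m, w m * U n m := fun n => by
    rw [← unnormalizedPosterior_of_forall_eq_one (P 0) (hΛS · ℓ₀ hℓ₀S) n]
    exact single_le_sum (fun m _ => mul_nonneg (hw m).le (hU n m)) (mem_univ ℓ₀)
  have hD0 : ∀ n, ∑ m, w m * U n m ≠ 0 := fun n => (hc.trans_le (hD n)).ne'
  have hoff : ∀ ℓ ∉ S, Tendsto (fun n => P n ℓ) atTop (𝓝 0) := fun ℓ hℓ => by
    simpa only [posterior_eq_div hupd hnorm hD0] using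
      (tendsto_unnormalizedPosterior_zero (P 0) hα0.le hα1 (hΛval · ℓ) (hΛoff ℓ hℓ)).div_of_le
        (hU · ℓ) hc hD
  exact ⟨hoff, tendsto_sum_mul_of_tendsto_zero_compl S (sum_mul_posterior_eq_one hupd hnorm hD0)
    hoff⟩
end
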